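/- Let m, n ≥ 1, let Φ¹ ≤ Γ¹ and Φ² ≤ Γ² be integer m×n prefix-bound matrices, let f ≤ g be integer m×n matrices, and let α ≤ β be integers. Then the convex hull in ℝ^{S_{m,n}} of the set of integer prefix-bounded matrices A (with respect to Φ¹, Γ¹, Φ², Γ²) satisfying f ≤ A ≤ g and α ≤ Ã(S_{m,n}) ≤ β equals the polyhedron {x ∈ ℝ^{S_{m,n}} : Φ¹(i,j) ≤ x̃(P¹_{i,j}) ≤ Γ¹(i,j) and Φ²(i,j) ≤ x̃(P²_{i,j}) ≤ Γ²(i,j) for every (i,j) ∈ S_{m,n}, f ≤ x ≤ g, and α ≤ x̃(S_{m,n}) ≤ β}. -/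
import Mathlib


/-- The set of positions of an m×n matrix, 1-based: S_{m,n} = [m] × [n]. -/
def Smn (m n : ℕ) : Finset (ℕ × ℕ) := Finset.Icc 1 m ×ˢ Finset.Icc 1 n

/-- The horizontal prefix P¹_{i,j} = {(i,1), …, (i,j)}. -/
def hPrefix (i j : ℕ) : Finset (ℕ × ℕ) := {i} ×ˢ Finset.Icc 1 j

/-- The vertical prefix P²_{i,j} = {(1,j), …, (i,j)}. -/
def vPrefix (i j : ℕ) : Finset (ℕ × ℕ) := Finset.Icc 1 i ×ˢ {j}

/-- x̃(X), the sum of the entries of x at the positions in X. -/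
def fsum (x : ℕ × ℕ → ℤ) (X : Finset (ℕ × ℕ)) : ℤ := ∑ s ∈ X, x s

/-- A is a prefix-bounded matrix (PBM) of size m×n with respect to the
horizontal-prefix bounds Φ1 ≤ Γ1 and the vertical-prefix bounds Φ2 ≤ Γ2. -/
def IsPBM (m n : ℕ) (Φ1 Γ1 Φ2 Γ2 : ℕ × ℕ → ℤ) (A : ℕ × ℕ → ℤ) : Prop :=
  ∀ i ∈ Finset.Icc 1 m, ∀ j ∈ Finset.Icc 1 n,
    (Φ1 (i, j) ≤ fsum A (hPrefix i j) ∧ fsum A (hPrefix i j) ≤ Γ1 (i, j)) ∧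
    (Φ2 (i, j) ≤ fsum A (vPrefix i j) ∧ fsum A (vPrefix i j) ≤ Γ2 (i, j))

/-- Starting positions of the maximal horizontal segments of X ⊆ S_{m,n}. -/
def hStarts (X : Finset (ℕ × ℕ)) : Finset (ℕ × ℕ) :=
  X.filter (fun s => (s.1, s.2 - 1) ∉ X)

/-- Ending positions of the maximal horizontal segments of X ⊆ S_{m,n}. -/
def hEnds (X : Finset (ℕ × ℕ)) : Finset (ℕ × ℕ) :=
  X.filter (fun s => (s.1, s.2 + 1) ∉ X)

/-- Starting positions of the maximal vertical segments of X ⊆ S_{m,n}. -/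
def vStarts (X : Finset (ℕ × ℕ)) : Finset (ℕ × ℕ) :=
  X.filter (fun s => (s.1 - 1, s.2) ∉ X)

/-- Ending positions of the maximal vertical segments of X ⊆ S_{m,n}. -/
def vEnds (X : Finset (ℕ × ℕ)) : Finset (ℕ × ℕ) :=
  X.filter (fun s => (s.1 + 1, s.2) ∉ X)

/-- σ₁(X): the number of maximal horizontal segments of X. -/
def sigma1 (X : Finset (ℕ × ℕ)) : ℕ := (hStarts X).card

/-- σ₂(X): the number of maximal vertical segments of X. -/
def sigma2 (X : Finset (ℕ × ℕ)) : ℕ := (vStarts X).card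

/-- p*₁(X) = Σ [Φ¹(i,j₂) − Γ¹(i,j₁−1)] over the maximal horizontal segments
{(i,j₁),…,(i,j₂)} of X, with the convention Γ¹(i,0) = 0. -/
def pstar1 (Φ1 Γ1 : ℕ × ℕ → ℤ) (X : Finset (ℕ × ℕ)) : ℤ :=
  ∑ s ∈ hEnds X, Φ1 s -
    ∑ s ∈ hStarts X, (if s.2 = 1 then 0 else Γ1 (s.1, s.2 - 1))

/-- b*₁(X) = Σ [Γ¹(i,j₂) − Φ¹(i,j₁−1)] over the maximal horizontal segments
{(i,j₁),…,(i,j₂)} of X, with the convention Φ¹(i,0) = 0. -/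
def bstar1 (Φ1 Γ1 : ℕ × ℕ → ℤ) (X : Finset (ℕ × ℕ)) : ℤ :=
  ∑ s ∈ hEnds X, Γ1 s -
    ∑ s ∈ hStarts X, (if s.2 = 1 then 0 else Φ1 (s.1, s.2 - 1))

/-- p*₂(X) = Σ [Φ²(i₂,j) − Γ²(i₁−1,j)] over the maximal vertical segments
{(i₁,j),…,(i₂,j)} of X, with the convention Γ²(0,j) = 0. -/
def pstar2 (Φ2 Γ2 : ℕ × ℕ → ℤ) (X : Finset (ℕ × ℕ)) : ℤ :=
  ∑ s ∈ vEnds X, Φ2 s -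
    ∑ s ∈ vStarts X, (if s.1 = 1 then 0 else Γ2 (s.1 - 1, s.2))

/-- b*₂(X) = Σ [Γ²(i₂,j) − Φ²(i₁−1,j)] over the maximal vertical segments
{(i₁,j),…,(i₂,j)} of X, with the convention Φ²(0,j) = 0. -/
def bstar2 (Φ2 Γ2 : ℕ × ℕ → ℤ) (X : Finset (ℕ × ℕ)) : ℤ :=
  ∑ s ∈ vEnds X, Γ2 s -
    ∑ s ∈ vStarts X, (if s.1 = 1 then 0 else Φ2 (s.1 - 1, s.2))

set_option linter.unusedSectionVars false

/-- A real number is integral. -/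
def IsIntR (r : ℝ) : Prop := ∃ k : ℤ, r = k

lemma IsIntR.add {a b : ℝ} (ha : IsIntR a) (hb : IsIntR b) : IsIntR (a + b) := by
  obtain ⟨k, rfl⟩ := ha; obtain ⟨l, rfl⟩ := hb; exact ⟨k + l, by push_cast; ring⟩

lemma IsIntR.sub {a b : ℝ} (ha : IsIntR a) (hb : IsIntR b) : IsIntR (a - b) := by
  obtain ⟨k, rfl⟩ := ha; obtain ⟨l, rfl⟩ := hb; exact ⟨k - l, by push_cast; ring⟩

lemma isIntR_sum {α : Type*} {s : Finset α} {f : α → ℝ} (h : ∀ a ∈ s, IsIntR (f a)) :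
    IsIntR (∑ a ∈ s, f a) :=
  Finset.sum_induction f IsIntR (fun _ _ ha hb => ha.add hb) ⟨0, by norm_num⟩ h

/-- Vertices of the auxiliary flow network. -/
inductive Vtx where
  | w (i j : ℕ) | z (i j : ℕ) | A | B
deriving DecidableEq

/-- Edges of the auxiliary flow network. -/
inductive Edg where
  | ch (i j : ℕ) | R (i j : ℕ) | C (i j : ℕ) | T
deriving DecidableEq

def esrc (m : ℕ) : Edg → Vtx
  | .ch i j => .z i j
  | .R i j => .w i j
  | .C i j => if i = m then .B else .z (i+1) j
  | .T => .A

def etgt (n : ℕ) : Edg → Vtx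
  | .ch i j => .w i j
  | .R i j => if j = n then .A else .w i (j+1)
  | .C i j => .z i j
  | .T => .B

/-- All edges of the network. -/
def EE (m n : ℕ) : Finset Edg :=
  ((Smn m n).image (fun s => Edg.ch s.1 s.2) ∪ (Smn m n).image (fun s => Edg.R s.1 s.2)) ∪
    ((Smn m n).image (fun s => Edg.C s.1 s.2) ∪ {Edg.T})

/-- The value carried by each edge. -/
def eval' (m n : ℕ) (x : ℕ × ℕ → ℝ) : Edg → ℝ
  | .ch i j => x (i, j)
  | .R i j => ∑ s ∈ hPrefix i j, x s
  | .C i j => ∑ s ∈ vPrefix i j, x s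
  | .T => ∑ s ∈ Smn m n, x s

lemma EE_cases {m n : ℕ} {e : Edg} (he : e ∈ EE m n) :
    (∃ i j, (i, j) ∈ Smn m n ∧ e = Edg.ch i j) ∨ (∃ i j, (i, j) ∈ Smn m n ∧ e = Edg.R i j) ∨
      (∃ i j, (i, j) ∈ Smn m n ∧ e = Edg.C i j) ∨ e = Edg.T := by
  unfold EE at he
  rcases Finset.mem_union.1 he with h1 | h1
  · rcases Finset.mem_union.1 h1 with h2 | h2
    · obtain ⟨s, hs, rfl⟩ := Finset.mem_image.1 h2
      exact Or.inl ⟨s.1, s.2, by rwa [Prod.mk.eta], rfl⟩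
    · obtain ⟨s, hs, rfl⟩ := Finset.mem_image.1 h2
      exact Or.inr (Or.inl ⟨s.1, s.2, by rwa [Prod.mk.eta], rfl⟩)
  · rcases Finset.mem_union.1 h1 with h2 | h2
    · obtain ⟨s, hs, rfl⟩ := Finset.mem_image.1 h2
      exact Or.inr (Or.inr (Or.inl ⟨s.1, s.2, by rwa [Prod.mk.eta], rfl⟩))
    · exact Or.inr (Or.inr (Or.inr (Finset.mem_singleton.1 h2)))

lemma mem_EE_ch {m n i j : ℕ} : Edg.ch i j ∈ EE m n ↔ (i, j) ∈ Smn m n := by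
  constructor
  · intro he
    rcases EE_cases he with ⟨i', j', hs, h⟩ | ⟨i', j', hs, h⟩ | ⟨i', j', hs, h⟩ | h
    · obtain ⟨rfl, rfl⟩ : i = i' ∧ j = j' := by injection h with h1 h2; exact ⟨h1, h2⟩
      exact hs
    · exact Edg.noConfusion h
    · exact Edg.noConfusion h
    · exact Edg.noConfusion h
  · intro h
    exact Finset.mem_union_left _ (Finset.mem_union_left _ (Finset.mem_image.2 ⟨(i, j), h, rfl⟩))

lemma mem_EE_R {m n i j : ℕ} : Edg.R i j ∈ EE m n ↔ (i, j) ∈ Smn m n := by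
  constructor
  · intro he
    rcases EE_cases he with ⟨i', j', hs, h⟩ | ⟨i', j', hs, h⟩ | ⟨i', j', hs, h⟩ | h
    · exact Edg.noConfusion h
    · obtain ⟨rfl, rfl⟩ : i = i' ∧ j = j' := by injection h with h1 h2; exact ⟨h1, h2⟩
      exact hs
    · exact Edg.noConfusion h
    · exact Edg.noConfusion h
  · intro h
    exact Finset.mem_union_left _ (Finset.mem_union_right _ (Finset.mem_image.2 ⟨(i, j), h, rfl⟩))

lemma mem_EE_C {m n i j : ℕ} : Edg.C i j ∈ EE m n ↔ (i, j) ∈ Smn m n := by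
  constructor
  · intro he
    rcases EE_cases he with ⟨i', j', hs, h⟩ | ⟨i', j', hs, h⟩ | ⟨i', j', hs, h⟩ | h
    · exact Edg.noConfusion h
    · exact Edg.noConfusion h
    · obtain ⟨rfl, rfl⟩ : i = i' ∧ j = j' := by injection h with h1 h2; exact ⟨h1, h2⟩
      exact hs
    · exact Edg.noConfusion h
  · intro h
    exact Finset.mem_union_right _ (Finset.mem_union_left _ (Finset.mem_image.2 ⟨(i, j), h, rfl⟩))

lemma mem_EE_T {m n : ℕ} : Edg.T ∈ EE m n :=
  Finset.mem_union_right _ (Finset.mem_union_right _ (Finset.mem_singleton.2 rfl))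

lemma EE_sum {M : Type*} [AddCommMonoid M] (m n : ℕ) (G : Edg → M) :
    ∑ e ∈ EE m n, G e = ∑ s ∈ Smn m n, G (.ch s.1 s.2) + ∑ s ∈ Smn m n, G (.R s.1 s.2) +
      ∑ s ∈ Smn m n, G (.C s.1 s.2) + G .T := by
  classical
  have hinj1 : ∀ a ∈ Smn m n, ∀ b ∈ Smn m n, Edg.ch a.1 a.2 = Edg.ch b.1 b.2 → a = b := by
    intro a _ b _ h; cases a; cases b; simpa using h
  have hinj2 : ∀ a ∈ Smn m n, ∀ b ∈ Smn m n, Edg.R a.1 a.2 = Edg.R b.1 b.2 → a = b := by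
    intro a _ b _ h; cases a; cases b; simpa using h
  have hinj3 : ∀ a ∈ Smn m n, ∀ b ∈ Smn m n, Edg.C a.1 a.2 = Edg.C b.1 b.2 → a = b := by
    intro a _ b _ h; cases a; cases b; simpa using h
  have d1 : Disjoint ((Smn m n).image (fun s => Edg.ch s.1 s.2))
      ((Smn m n).image (fun s => Edg.R s.1 s.2)) := by
    rw [Finset.disjoint_left]; rintro e he1 he2
    obtain ⟨s, _, rfl⟩ := Finset.mem_image.1 he1
    obtain ⟨t, _, ht⟩ := Finset.mem_image.1 he2
    exact Edg.noConfusion ht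
  have d2 : Disjoint ((Smn m n).image (fun s => Edg.C s.1 s.2)) ({Edg.T} : Finset Edg) := by
    rw [Finset.disjoint_left]; rintro e he1 he2
    obtain ⟨s, _, rfl⟩ := Finset.mem_image.1 he1
    exact Edg.noConfusion (Finset.mem_singleton.1 he2)
  have d3 : Disjoint ((Smn m n).image (fun s => Edg.ch s.1 s.2) ∪
      (Smn m n).image (fun s => Edg.R s.1 s.2))
      ((Smn m n).image (fun s => Edg.C s.1 s.2) ∪ ({Edg.T} : Finset Edg)) := by
    rw [Finset.disjoint_left]; rintro e he1 he2
    rcases Finset.mem_union.1 he1 with h1 | h1 <;> obtain ⟨s, _, rfl⟩ := Finset.mem_image.1 h1 <;>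
      rcases Finset.mem_union.1 he2 with h2 | h2
    · obtain ⟨t, _, ht⟩ := Finset.mem_image.1 h2; exact Edg.noConfusion ht
    · exact Edg.noConfusion (Finset.mem_singleton.1 h2)
    · obtain ⟨t, _, ht⟩ := Finset.mem_image.1 h2; exact Edg.noConfusion ht
    · exact Edg.noConfusion (Finset.mem_singleton.1 h2)
  unfold EE
  rw [Finset.sum_union d3, Finset.sum_union d1, Finset.sum_union d2, Finset.sum_singleton,
    Finset.sum_image hinj1, Finset.sum_image hinj2, Finset.sum_image hinj3, ← add_assoc]

-- prefix-sum helper lemmas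
lemma sum_hPrefix (x : ℕ × ℕ → ℝ) (i j : ℕ) :
    ∑ s ∈ hPrefix i j, x s = ∑ b ∈ Finset.Icc 1 j, x (i, b) := by
  unfold hPrefix
  rw [Finset.sum_product]
  simp

lemma sum_vPrefix (x : ℕ × ℕ → ℝ) (i j : ℕ) :
    ∑ s ∈ vPrefix i j, x s = ∑ a ∈ Finset.Icc 1 i, x (a, j) := by
  unfold vPrefix
  rw [Finset.sum_product]
  simp

lemma sum_Smn_rows (x : ℕ × ℕ → ℝ) (m n : ℕ) :
    ∑ s ∈ Smn m n, x s = ∑ a ∈ Finset.Icc 1 m, ∑ s ∈ hPrefix a n, x s := by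
  unfold Smn
  rw [Finset.sum_product]
  exact Finset.sum_congr rfl fun a _ => (sum_hPrefix x a n).symm

lemma sum_Smn_cols (x : ℕ × ℕ → ℝ) (m n : ℕ) :
    ∑ s ∈ Smn m n, x s = ∑ b ∈ Finset.Icc 1 n, ∑ s ∈ vPrefix m b, x s := by
  unfold Smn
  rw [Finset.sum_product_right]
  exact Finset.sum_congr rfl fun b _ => (sum_vPrefix x m b).symm

lemma hPrefix_succ (x : ℕ × ℕ → ℝ) (i j : ℕ) :
    ∑ s ∈ hPrefix i (j + 1), x s = ∑ s ∈ hPrefix i j, x s + x (i, j + 1) := by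
  rw [sum_hPrefix, sum_hPrefix, Finset.sum_Icc_succ_top (by omega : 1 ≤ j + 1)]

lemma hPrefix_one (x : ℕ × ℕ → ℝ) (i : ℕ) :
    ∑ s ∈ hPrefix i 1, x s = x (i, 1) := by
  rw [sum_hPrefix]; simp

lemma vPrefix_succ (x : ℕ × ℕ → ℝ) (i j : ℕ) :
    ∑ s ∈ vPrefix (i + 1) j, x s = ∑ s ∈ vPrefix i j, x s + x (i + 1, j) := by
  rw [sum_vPrefix, sum_vPrefix, Finset.sum_Icc_succ_top (by omega : 1 ≤ i + 1)]

lemma vPrefix_one (x : ℕ × ℕ → ℝ) (j : ℕ) :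
    ∑ s ∈ vPrefix 1 j, x s = x (1, j) := by
  rw [sum_vPrefix]; simp

-- fractionality helpers
lemma frac_or {a b c : ℝ} (h : a = b + c) (ha : ¬IsIntR a) : ¬IsIntR b ∨ ¬IsIntR c := by
  by_contra hc
  push_neg at hc
  exact ha (h ▸ hc.1.add hc.2)

lemma frac_or' {a b c : ℝ} (h : a = b + c) (hc : ¬IsIntR c) : ¬IsIntR a ∨ ¬IsIntR b := by
  by_contra hh
  push_neg at hh
  have := hh.1.sub hh.2
  rw [h, add_sub_cancel_left] at this
  exact hc this

lemma frac_or'' {a b c : ℝ} (h : a = b + c) (hb : ¬IsIntR b) : ¬IsIntR a ∨ ¬IsIntR c :=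
  frac_or' (by rw [h, add_comm]) hb

lemma frac_sum_mem {α : Type*} {s : Finset α} {f : α → ℝ} (h : ¬IsIntR (∑ a ∈ s, f a)) :
    ∃ a ∈ s, ¬ IsIntR (f a) := by
  by_contra hc
  push_neg at hc
  exact h (isIntR_sum hc)

lemma frac_erase {α : Type*} [DecidableEq α] {s : Finset α} {f : α → ℝ} {i : α} (hi : i ∈ s)
    (hfi : ¬IsIntR (f i)) (hsum : IsIntR (∑ a ∈ s, f a)) :
    ∃ a ∈ s, a ≠ i ∧ ¬IsIntR (f a) := by
  have h1 : ¬ IsIntR (∑ a ∈ s.erase i, f a) := by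
    intro hint
    apply hfi
    have h2 : ∑ a ∈ s, f a = f i + ∑ a ∈ s.erase i, f a := (Finset.add_sum_erase s f hi).symm
    have := hsum.sub hint
    rwa [h2, add_sub_cancel_right] at this
  obtain ⟨a, ha, hfa⟩ := frac_sum_mem h1
  exact ⟨a, Finset.mem_of_mem_erase ha, (Finset.mem_erase.1 ha).1, hfa⟩

lemma mem_Smn {m n : ℕ} {s : ℕ × ℕ} :
    s ∈ Smn m n ↔ (1 ≤ s.1 ∧ s.1 ≤ m) ∧ (1 ≤ s.2 ∧ s.2 ≤ n) := by
  simp [Smn, Finset.mem_product, Finset.mem_Icc]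

noncomputable def fracSet (m n : ℕ) (x : ℕ × ℕ → ℝ) : Finset Edg :=
  @Finset.filter _ (fun e => ¬ IsIntR (eval' m n x e)) (fun _ => Classical.propDecidable _)
    (EE m n)

lemma mem_fracSet {m n : ℕ} {x : ℕ × ℕ → ℝ} {e : Edg} :
    e ∈ fracSet m n x ↔ e ∈ EE m n ∧ ¬ IsIntR (eval' m n x e) := by
  unfold fracSet
  exact @Finset.mem_filter _ _ (fun _ => Classical.propDecidable _) _ _

lemma network_loopless (m n : ℕ) (x : ℕ × ℕ → ℝ) :
    ∀ e ∈ fracSet m n x, esrc m e ≠ etgt n e := by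
  intro e _
  match e with
  | .ch i j => exact fun h => Vtx.noConfusion h
  | .R i j =>
    simp only [esrc, etgt]
    split
    · exact fun h => Vtx.noConfusion h
    · intro h
      have : j = j + 1 := by injection h with _ h2
      omega
  | .C i j =>
    simp only [esrc, etgt]
    split
    · exact fun h => Vtx.noConfusion h
    · intro h
      have : i + 1 = i := by injection h with h1 _
      omega
  | .T => exact fun h => Vtx.noConfusion h

lemma network_deg {m n : ℕ} {x : ℕ × ℕ → ℝ} (hm : 1 ≤ m) (hn : 1 ≤ n) :
    ∀ v, ∀ e ∈ fracSet m n x, (esrc m e = v ∨ etgt n e = v) →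
      ∃ e' ∈ fracSet m n x, e' ≠ e ∧ (esrc m e' = v ∨ etgt n e' = v) := by
  intro v e he hinc
  rw [mem_fracSet] at he
  obtain ⟨heE, hef⟩ := he
  rcases EE_cases heE with ⟨i, j, hs, rfl⟩ | ⟨i, j, hs, rfl⟩ | ⟨i, j, hs, rfl⟩ | rfl
  -- e = ch i j
  · obtain ⟨⟨hi1, hi2⟩, ⟨hj1, hj2⟩⟩ := mem_Smn.1 hs
    rcases hinc with hv | hv
    · -- v = z i j ; vertical relation
      simp only [esrc] at hv
      subst hv
      by_cases hi : i = 1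
      · subst hi
        refine ⟨.C 1 j, mem_fracSet.2 ⟨mem_EE_C.2 hs, ?_⟩, fun h => Edg.noConfusion h,
          Or.inr rfl⟩
        simpa only [eval', vPrefix_one] using hef
      · obtain ⟨ii, rfl⟩ : ∃ ii, i = ii + 1 := ⟨i - 1, by omega⟩
        have hii : 1 ≤ ii := by omega
        have hrel : eval' m n x (.C (ii + 1) j) =
            eval' m n x (.C ii j) + eval' m n x (.ch (ii + 1) j) := by
          simp only [eval', vPrefix_succ]
        rcases frac_or' hrel hef with h | h
        · exact ⟨.C (ii + 1) j, mem_fracSet.2 ⟨mem_EE_C.2 hs, h⟩,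
            fun hq => Edg.noConfusion hq, Or.inr rfl⟩
        · refine ⟨.C ii j, mem_fracSet.2 ⟨mem_EE_C.2 (mem_Smn.2 ⟨⟨by omega, by omega⟩,
            ⟨hj1, hj2⟩⟩), h⟩, fun hq => Edg.noConfusion hq, Or.inl ?_⟩
          simp only [esrc]
          rw [if_neg (by omega : ¬ ii = m)]
    · -- v = w i j ; horizontal relation
      simp only [etgt] at hv
      subst hv
      by_cases hj : j = 1
      · subst hj
        refine ⟨.R i 1, mem_fracSet.2 ⟨mem_EE_R.2 hs, ?_⟩, fun h => Edg.noConfusion h,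
          Or.inl rfl⟩
        simpa only [eval', hPrefix_one] using hef
      · obtain ⟨jj, rfl⟩ : ∃ jj, j = jj + 1 := ⟨j - 1, by omega⟩
        have hjj : 1 ≤ jj := by omega
        have hrel : eval' m n x (.R i (jj + 1)) =
            eval' m n x (.R i jj) + eval' m n x (.ch i (jj + 1)) := by
          simp only [eval', hPrefix_succ]
        rcases frac_or' hrel hef with h | h
        · exact ⟨.R i (jj + 1), mem_fracSet.2 ⟨mem_EE_R.2 hs, h⟩,
            fun hq => Edg.noConfusion hq, Or.inl rfl⟩
        · refine ⟨.R i jj, mem_fracSet.2 ⟨mem_EE_R.2 (mem_Smn.2 ⟨⟨hi1, hi2⟩,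
            ⟨by omega, by omega⟩⟩), h⟩, fun hq => Edg.noConfusion hq, Or.inr ?_⟩
          simp only [etgt]
          rw [if_neg (by omega : ¬ jj = n)]
  -- e = R i j
  · obtain ⟨⟨hi1, hi2⟩, ⟨hj1, hj2⟩⟩ := mem_Smn.1 hs
    rcases hinc with hv | hv
    · -- v = w i j
      simp only [esrc] at hv
      subst hv
      by_cases hj : j = 1
      · subst hj
        refine ⟨.ch i 1, mem_fracSet.2 ⟨mem_EE_ch.2 hs, ?_⟩, fun h => Edg.noConfusion h,
          Or.inr rfl⟩
        have heq : eval' m n x (.R i 1) = eval' m n x (.ch i 1) := by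
          simp only [eval']
          exact hPrefix_one x i
        rwa [heq] at hef
      · obtain ⟨jj, rfl⟩ : ∃ jj, j = jj + 1 := ⟨j - 1, by omega⟩
        have hjj : 1 ≤ jj := by omega
        have hrel : eval' m n x (.R i (jj + 1)) =
            eval' m n x (.R i jj) + eval' m n x (.ch i (jj + 1)) := by
          simp only [eval', hPrefix_succ]
        rcases frac_or hrel hef with h | h
        · refine ⟨.R i jj, mem_fracSet.2 ⟨mem_EE_R.2 (mem_Smn.2 ⟨⟨hi1, hi2⟩,
            ⟨by omega, by omega⟩⟩), h⟩, ?_, Or.inr ?_⟩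
          · intro hq
            have : jj = jj + 1 := by injection hq with _ h2
            omega
          · simp only [etgt]
            rw [if_neg (by omega : ¬ jj = n)]
        · exact ⟨.ch i (jj + 1), mem_fracSet.2 ⟨mem_EE_ch.2 hs, h⟩,
            fun hq => Edg.noConfusion hq, Or.inr rfl⟩
    · -- v = etgt (R i j)
      simp only [etgt] at hv
      by_cases hjn : j = n
      · rw [if_pos hjn] at hv
        subst hv
        rw [hjn] at hef hs ⊢
        have hrel : eval' m n x .T = ∑ a ∈ Finset.Icc 1 m, eval' m n x (.R a n) := by
          simp only [eval']
          exact sum_Smn_rows x m n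
        by_cases hT : IsIntR (eval' m n x .T)
        · have hex : ∃ a ∈ Finset.Icc 1 m, a ≠ i ∧ ¬ IsIntR (eval' m n x (.R a n)) := by
            apply frac_erase (f := fun a => eval' m n x (.R a n)) (i := i)
              (Finset.mem_Icc.2 ⟨hi1, hi2⟩) hef
            rwa [← hrel]
          obtain ⟨a, ha, hai, hfa⟩ := hex
          rw [Finset.mem_Icc] at ha
          refine ⟨.R a n, mem_fracSet.2 ⟨mem_EE_R.2 (mem_Smn.2 ⟨⟨ha.1, ha.2⟩, ⟨by omega, le_refl n⟩⟩), hfa⟩,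
            ?_, Or.inr ?_⟩
          · intro hq
            have : a = i := by injection hq with h1 _
            exact hai this
          · simp [etgt]
        · exact ⟨.T, mem_fracSet.2 ⟨mem_EE_T, hT⟩, fun hq => Edg.noConfusion hq, Or.inl rfl⟩
      · rw [if_neg hjn] at hv
        subst hv
        have hrel : eval' m n x (.R i (j + 1)) =
            eval' m n x (.R i j) + eval' m n x (.ch i (j + 1)) := by
          simp only [eval', hPrefix_succ]
        have hs' : (i, j + 1) ∈ Smn m n := mem_Smn.2 ⟨⟨hi1, hi2⟩, ⟨by omega, by omega⟩⟩
        rcases frac_or'' hrel hef with h | h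
        · refine ⟨.R i (j + 1), mem_fracSet.2 ⟨mem_EE_R.2 hs', h⟩, ?_, Or.inl rfl⟩
          intro hq
          have : j + 1 = j := by injection hq with _ h2
          omega
        · exact ⟨.ch i (j + 1), mem_fracSet.2 ⟨mem_EE_ch.2 hs', h⟩,
            fun hq => Edg.noConfusion hq, Or.inr rfl⟩
  -- e = C i j
  · obtain ⟨⟨hi1, hi2⟩, ⟨hj1, hj2⟩⟩ := mem_Smn.1 hs
    rcases hinc with hv | hv
    · -- v = esrc (C i j)
      simp only [esrc] at hv
      by_cases him : i = m
      · rw [if_pos him] at hv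
        subst hv
        rw [him] at hef hs ⊢
        have hrel : eval' m n x .T = ∑ b ∈ Finset.Icc 1 n, eval' m n x (.C m b) := by
          simp only [eval']
          exact sum_Smn_cols x m n
        by_cases hT : IsIntR (eval' m n x .T)
        · have hex : ∃ b ∈ Finset.Icc 1 n, b ≠ j ∧ ¬ IsIntR (eval' m n x (.C m b)) := by
            apply frac_erase (f := fun b => eval' m n x (.C m b)) (i := j)
              (Finset.mem_Icc.2 ⟨hj1, hj2⟩) hef
            rwa [← hrel]
          obtain ⟨b, hb, hbj, hfb⟩ := hex
          rw [Finset.mem_Icc] at hb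
          refine ⟨.C m b, mem_fracSet.2 ⟨mem_EE_C.2 (mem_Smn.2 ⟨⟨by omega, le_refl m⟩, ⟨hb.1, hb.2⟩⟩), hfb⟩,
            ?_, Or.inl ?_⟩
          · intro hq
            have : b = j := by injection hq with _ h2
            exact hbj this
          · simp [esrc]
        · exact ⟨.T, mem_fracSet.2 ⟨mem_EE_T, hT⟩, fun hq => Edg.noConfusion hq, Or.inr rfl⟩
      · rw [if_neg him] at hv
        subst hv
        have hrel : eval' m n x (.C (i + 1) j) =
            eval' m n x (.C i j) + eval' m n x (.ch (i + 1) j) := by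
          simp only [eval', vPrefix_succ]
        have hs' : (i + 1, j) ∈ Smn m n := mem_Smn.2 ⟨⟨by omega, by omega⟩, ⟨hj1, hj2⟩⟩
        rcases frac_or'' hrel hef with h | h
        · refine ⟨.C (i + 1) j, mem_fracSet.2 ⟨mem_EE_C.2 hs', h⟩, ?_, Or.inr rfl⟩
          intro hq
          have : i + 1 = i := by injection hq with h1 _
          omega
        · exact ⟨.ch (i + 1) j, mem_fracSet.2 ⟨mem_EE_ch.2 hs', h⟩,
            fun hq => Edg.noConfusion hq, Or.inl rfl⟩
    · -- v = z i j
      simp only [etgt] at hv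
      subst hv
      by_cases hi : i = 1
      · subst hi
        refine ⟨.ch 1 j, mem_fracSet.2 ⟨mem_EE_ch.2 hs, ?_⟩, fun h => Edg.noConfusion h,
          Or.inl rfl⟩
        have heq : eval' m n x (.C 1 j) = eval' m n x (.ch 1 j) := by
          simp only [eval']
          exact vPrefix_one x j
        rwa [heq] at hef
      · obtain ⟨ii, rfl⟩ : ∃ ii, i = ii + 1 := ⟨i - 1, by omega⟩
        have hii : 1 ≤ ii := by omega
        have hrel : eval' m n x (.C (ii + 1) j) =
            eval' m n x (.C ii j) + eval' m n x (.ch (ii + 1) j) := by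
          simp only [eval', vPrefix_succ]
        rcases frac_or hrel hef with h | h
        · refine ⟨.C ii j, mem_fracSet.2 ⟨mem_EE_C.2 (mem_Smn.2 ⟨⟨by omega, by omega⟩,
            ⟨hj1, hj2⟩⟩), h⟩, ?_, Or.inl ?_⟩
          · intro hq
            have : ii = ii + 1 := by injection hq with h1 _
            omega
          · simp only [esrc]
            rw [if_neg (by omega : ¬ ii = m)]
        · exact ⟨.ch (ii + 1) j, mem_fracSet.2 ⟨mem_EE_ch.2 hs, h⟩,
            fun hq => Edg.noConfusion hq, Or.inl rfl⟩
  -- e = T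
  · rcases hinc with hv | hv
    · simp only [esrc] at hv
      subst hv
      have hrel : eval' m n x .T = ∑ a ∈ Finset.Icc 1 m, eval' m n x (.R a n) := by
        simp only [eval']
        exact sum_Smn_rows x m n
      rw [hrel] at hef
      obtain ⟨a, ha, hfa⟩ := frac_sum_mem hef
      rw [Finset.mem_Icc] at ha
      refine ⟨.R a n, mem_fracSet.2 ⟨mem_EE_R.2 (mem_Smn.2 ⟨⟨ha.1, ha.2⟩, ⟨hn, le_refl n⟩⟩), hfa⟩,
        fun hq => Edg.noConfusion hq, Or.inr ?_⟩
      simp [etgt]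
    · simp only [etgt] at hv
      subst hv
      have hrel : eval' m n x .T = ∑ b ∈ Finset.Icc 1 n, eval' m n x (.C m b) := by
        simp only [eval']
        exact sum_Smn_cols x m n
      rw [hrel] at hef
      obtain ⟨b, hb, hfb⟩ := frac_sum_mem hef
      rw [Finset.mem_Icc] at hb
      refine ⟨.C m b, mem_fracSet.2 ⟨mem_EE_C.2 (mem_Smn.2 ⟨⟨hm, le_refl m⟩, ⟨hb.1, hb.2⟩⟩), hfb⟩,
        fun hq => Edg.noConfusion hq, Or.inl ?_⟩
      simp [esrc]

def rowPot (i j : ℕ) : Vtx → ℤ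
  | .w a b => if a = i ∧ b ≤ j then 1 else 0
  | .z _ _ => 0
  | .A => 0
  | .B => 0

def colPot (i j : ℕ) : Vtx → ℤ
  | .z a b => if b = j ∧ a ≤ i then 1 else 0
  | .w _ _ => 0
  | .A => 0
  | .B => 0

def totPot : Vtx → ℤ
  | .w _ _ => 1
  | .A => 1
  | .z _ _ => 0
  | .B => 0

lemma filter_row {m n i j : ℕ} (hi1 : 1 ≤ i) (hi2 : i ≤ m) (hj2 : j ≤ n) :
    (Smn m n).filter (fun s => s.1 = i ∧ s.2 ≤ j) = hPrefix i j := by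
  ext s
  simp only [Finset.mem_filter, mem_Smn, hPrefix, Finset.mem_product, Finset.mem_singleton,
    Finset.mem_Icc]
  omega

lemma filter_col {m n i j : ℕ} (hj1 : 1 ≤ j) (hj2 : j ≤ n) (hi2 : i ≤ m) :
    (Smn m n).filter (fun s => s.2 = j ∧ s.1 ≤ i) = vPrefix i j := by
  ext s
  simp only [Finset.mem_filter, mem_Smn, vPrefix, Finset.mem_product, Finset.mem_singleton,
    Finset.mem_Icc]
  omega

lemma mem_Smn' {m n i j : ℕ} :
    (i, j) ∈ Smn m n ↔ (1 ≤ i ∧ i ≤ m) ∧ (1 ≤ j ∧ j ≤ n) := mem_Smn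

lemma flow_identities {m n : ℕ} {x : ℕ × ℕ → ℝ} (d : Edg → ℤ)
    (hsupp : ∀ e, d e ≠ 0 → e ∈ fracSet m n x)
    (hcons : ∀ p : Vtx → ℤ, ∑ e ∈ fracSet m n x, d e * (p (etgt n e) - p (esrc m e)) = 0) :
    (∀ i j, (i, j) ∈ Smn m n → ∑ s ∈ hPrefix i j, d (.ch s.1 s.2) = d (.R i j)) ∧
    (∀ i j, (i, j) ∈ Smn m n → ∑ s ∈ vPrefix i j, d (.ch s.1 s.2) = d (.C i j)) ∧
    (∑ s ∈ Smn m n, d (.ch s.1 s.2) = d .T) := by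
  classical
  have hsub : fracSet m n x ⊆ EE m n := fun e he => (mem_fracSet.1 he).1
  have hconsEE : ∀ p : Vtx → ℤ,
      ∑ e ∈ EE m n, d e * (p (etgt n e) - p (esrc m e)) = 0 := by
    intro p
    rw [← Finset.sum_subset hsub (fun e _ he => by
      have hz : d e = 0 := by
        by_contra hz
        exact he (hsupp e hz)
      rw [hz, zero_mul])]
    exact hcons p
  refine ⟨?_, ?_, ?_⟩
  · -- row identity
    intro i j hij
    obtain ⟨⟨hi1, hi2⟩, ⟨hj1, hj2⟩⟩ := mem_Smn'.1 hij
    have h0 := hconsEE (rowPot i j)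
    rw [EE_sum] at h0
    have hch : ∑ s ∈ Smn m n,
        d (.ch s.1 s.2) * (rowPot i j (etgt n (.ch s.1 s.2)) - rowPot i j (esrc m (.ch s.1 s.2)))
        = ∑ s ∈ hPrefix i j, d (.ch s.1 s.2) := by
      rw [← filter_row hi1 hi2 hj2, Finset.sum_filter]
      apply Finset.sum_congr rfl
      intro s _
      simp only [esrc, etgt, rowPot]
      split_ifs <;> ring
    have hR : ∑ s ∈ Smn m n,
        d (.R s.1 s.2) * (rowPot i j (etgt n (.R s.1 s.2)) - rowPot i j (esrc m (.R s.1 s.2)))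
        = - d (.R i j) := by
      have hpt : ∀ s ∈ Smn m n,
          d (.R s.1 s.2) * (rowPot i j (etgt n (.R s.1 s.2)) - rowPot i j (esrc m (.R s.1 s.2)))
          = if s = (i, j) then - d (.R s.1 s.2) else 0 := by
        intro s hsm
        rcases s with ⟨a, b⟩
        obtain ⟨⟨h1, h2⟩, ⟨h3, h4⟩⟩ := mem_Smn'.1 hsm
        simp only [esrc, etgt, rowPot, Prod.mk.injEq]
        by_cases hbn : b = n
        · rw [if_pos hbn]
          simp only [rowPot]
          split_ifs <;> first | ring1 | (exfalso; omega)
        · rw [if_neg hbn]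
          simp only [rowPot]
          split_ifs <;> first | ring1 | (exfalso; omega)
      rw [Finset.sum_congr rfl hpt, Finset.sum_ite_eq' (Smn m n) (i, j)
        (fun s => - d (.R s.1 s.2)), if_pos hij]
    have hC : ∑ s ∈ Smn m n,
        d (.C s.1 s.2) * (rowPot i j (etgt n (.C s.1 s.2)) - rowPot i j (esrc m (.C s.1 s.2)))
        = 0 := by
      apply Finset.sum_eq_zero
      intro s _
      simp only [esrc, etgt, rowPot]
      split_ifs <;> ring
    have hT : d .T * (rowPot i j (etgt n .T) - rowPot i j (esrc m .T)) = 0 := by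
      simp only [esrc, etgt, rowPot]
      ring
    rw [hch, hR, hC, hT] at h0
    linarith
  · -- column identity
    intro i j hij
    obtain ⟨⟨hi1, hi2⟩, ⟨hj1, hj2⟩⟩ := mem_Smn'.1 hij
    have h0 := hconsEE (colPot i j)
    rw [EE_sum] at h0
    have hch : ∑ s ∈ Smn m n,
        d (.ch s.1 s.2) * (colPot i j (etgt n (.ch s.1 s.2)) - colPot i j (esrc m (.ch s.1 s.2)))
        = - ∑ s ∈ vPrefix i j, d (.ch s.1 s.2) := by
      rw [← filter_col hj1 hj2 hi2, Finset.sum_filter, ← Finset.sum_neg_distrib]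
      apply Finset.sum_congr rfl
      intro s _
      simp only [esrc, etgt, colPot]
      split_ifs <;> ring
    have hR : ∑ s ∈ Smn m n,
        d (.R s.1 s.2) * (colPot i j (etgt n (.R s.1 s.2)) - colPot i j (esrc m (.R s.1 s.2)))
        = 0 := by
      apply Finset.sum_eq_zero
      intro s _
      simp only [esrc, etgt, colPot]
      split_ifs <;> ring
    have hC : ∑ s ∈ Smn m n,
        d (.C s.1 s.2) * (colPot i j (etgt n (.C s.1 s.2)) - colPot i j (esrc m (.C s.1 s.2)))
        = d (.C i j) := by
      have hpt : ∀ s ∈ Smn m n,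
          d (.C s.1 s.2) * (colPot i j (etgt n (.C s.1 s.2)) - colPot i j (esrc m (.C s.1 s.2)))
          = if s = (i, j) then d (.C s.1 s.2) else 0 := by
        intro s hsm
        rcases s with ⟨a, b⟩
        obtain ⟨⟨h1, h2⟩, ⟨h3, h4⟩⟩ := mem_Smn'.1 hsm
        simp only [esrc, etgt, colPot, Prod.mk.injEq]
        by_cases ham : a = m
        · rw [if_pos ham]
          simp only [colPot]
          split_ifs <;> first | ring1 | (exfalso; omega)
        · rw [if_neg ham]
          simp only [colPot]
          split_ifs <;> first | ring1 | (exfalso; omega)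
      rw [Finset.sum_congr rfl hpt, Finset.sum_ite_eq' (Smn m n) (i, j)
        (fun s => d (.C s.1 s.2)), if_pos hij]
    have hT : d .T * (colPot i j (etgt n .T) - colPot i j (esrc m .T)) = 0 := by
      simp only [esrc, etgt, colPot]
      ring
    rw [hch, hR, hC, hT] at h0
    linarith
  · -- total identity
    have h0 := hconsEE totPot
    rw [EE_sum] at h0
    have hch : ∑ s ∈ Smn m n,
        d (.ch s.1 s.2) * (totPot (etgt n (.ch s.1 s.2)) - totPot (esrc m (.ch s.1 s.2)))
        = ∑ s ∈ Smn m n, d (.ch s.1 s.2) := by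
      apply Finset.sum_congr rfl
      intro s _
      simp only [esrc, etgt, totPot]
      ring
    have hR : ∑ s ∈ Smn m n,
        d (.R s.1 s.2) * (totPot (etgt n (.R s.1 s.2)) - totPot (esrc m (.R s.1 s.2)))
        = 0 := by
      apply Finset.sum_eq_zero
      intro s _
      simp only [esrc, etgt, totPot]
      split_ifs <;> ring
    have hC : ∑ s ∈ Smn m n,
        d (.C s.1 s.2) * (totPot (etgt n (.C s.1 s.2)) - totPot (esrc m (.C s.1 s.2)))
        = 0 := by
      apply Finset.sum_eq_zero
      intro s _
      simp only [esrc, etgt, totPot]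
      split_ifs <;> ring
    have hT : d .T * (totPot (etgt n .T) - totPot (esrc m .T)) = - d .T := by
      simp only [esrc, etgt, totPot]
      ring
    rw [hch, hR, hC, hT] at h0
    linarith

def elb (Φ1 Φ2 f : ℕ × ℕ → ℤ) (α : ℤ) : Edg → ℤ
  | .ch i j => f (i, j)
  | .R i j => Φ1 (i, j)
  | .C i j => Φ2 (i, j)
  | .T => α

def eub (Γ1 Γ2 g : ℕ × ℕ → ℤ) (β : ℤ) : Edg → ℤ
  | .ch i j => g (i, j)
  | .R i j => Γ1 (i, j)
  | .C i j => Γ2 (i, j)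
  | .T => β

/-- The polyhedron, written via edge values. -/
def InP (m n : ℕ) (Φ1 Γ1 Φ2 Γ2 f g : ℕ × ℕ → ℤ) (α β : ℤ) (x : ℕ × ℕ → ℝ) : Prop :=
  (∀ e ∈ EE m n, ((elb Φ1 Φ2 f α e : ℝ) ≤ eval' m n x e ∧
    eval' m n x e ≤ (eub Γ1 Γ2 g β e : ℝ))) ∧ ∀ s ∉ Smn m n, x s = 0

lemma frac_floor_lt {r : ℝ} (h : ¬ IsIntR r) : (⌊r⌋ : ℝ) < r ∧ r < (⌈r⌉ : ℝ) :=
  ⟨lt_of_le_of_ne (Int.floor_le r) (fun h' => h ⟨⌊r⌋, h'.symm⟩),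
    lt_of_le_of_ne (Int.le_ceil r) (fun h' => h ⟨⌈r⌉, h'⟩)⟩

lemma push {m n : ℕ} {Φ1 Γ1 Φ2 Γ2 f g : ℕ × ℕ → ℤ} {α β : ℤ} {x : ℕ × ℕ → ℝ}
    (hx : InP m n Φ1 Γ1 Φ2 Γ2 f g α β x) (d : Edg → ℤ)
    (hsupp : ∀ e, d e ≠ 0 → e ∈ fracSet m n x)
    (hvals : ∀ e, d e = 0 ∨ d e = 1 ∨ d e = -1)
    (hnz : ∃ e, d e ≠ 0)
    (hf1 : ∀ i j, (i, j) ∈ Smn m n → ∑ s ∈ hPrefix i j, d (.ch s.1 s.2) = d (.R i j))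
    (hf2 : ∀ i j, (i, j) ∈ Smn m n → ∑ s ∈ vPrefix i j, d (.ch s.1 s.2) = d (.C i j))
    (hf3 : ∑ s ∈ Smn m n, d (.ch s.1 s.2) = d .T) :
    ∃ ε : ℝ, 0 < ε ∧ InP m n Φ1 Γ1 Φ2 Γ2 f g α β
        (fun s => x s + ε * (d (.ch s.1 s.2) : ℝ)) ∧
      (fracSet m n (fun s => x s + ε * (d (.ch s.1 s.2) : ℝ))).card < (fracSet m n x).card := by
  classical
  have heval : ∀ (c : ℝ), ∀ e ∈ EE m n,
      eval' m n (fun s => x s + c * (d (.ch s.1 s.2) : ℝ)) e =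
        eval' m n x e + c * (d e : ℝ) := by
    intro c e he
    rcases EE_cases he with ⟨i, j, hs, rfl⟩ | ⟨i, j, hs, rfl⟩ | ⟨i, j, hs, rfl⟩ | rfl
    · rfl
    · simp only [eval']
      rw [Finset.sum_add_distrib, ← Finset.mul_sum, ← hf1 i j hs]
      push_cast
      ring
    · simp only [eval']
      rw [Finset.sum_add_distrib, ← Finset.mul_sum, ← hf2 i j hs]
      push_cast
      ring
    · simp only [eval']
      rw [Finset.sum_add_distrib, ← Finset.mul_sum, ← hf3]
      push_cast
      ring
  set Fd : Finset Edg := (EE m n).filter (fun e => d e ≠ 0) with hFd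
  have hFdne : Fd.Nonempty := by
    obtain ⟨e₀, he₀⟩ := hnz
    exact ⟨e₀, Finset.mem_filter.2 ⟨(mem_fracSet.1 (hsupp e₀ he₀)).1, he₀⟩⟩
  set room : Edg → ℝ := fun e =>
    if d e = 1 then (⌈eval' m n x e⌉ : ℝ) - eval' m n x e
    else eval' m n x e - (⌊eval' m n x e⌋ : ℝ) with hroom
  have hfrac : ∀ e ∈ Fd, ¬ IsIntR (eval' m n x e) := by
    intro e he
    exact (mem_fracSet.1 (hsupp e (Finset.mem_filter.1 he).2)).2
  set ε : ℝ := Fd.inf' hFdne room with hε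
  have hεpos : 0 < ε := by
    rw [hε, Finset.lt_inf'_iff]
    intro e he
    obtain ⟨hfl, hcl⟩ := frac_floor_lt (hfrac e he)
    rw [hroom]
    dsimp only
    split_ifs
    · linarith
    · linarith
  have hεle : ∀ e ∈ Fd, ε ≤ room e := fun e he => Finset.inf'_le room he
  refine ⟨ε, hεpos, ⟨?_, ?_⟩, ?_⟩
  · -- bounds
    intro e he
    rw [heval ε e he]
    obtain ⟨hlb, hub⟩ := hx.1 e he
    rcases hvals e with h0 | h1 | hm1
    · rw [h0]
      constructor <;> simp [hlb, hub]
    · have heFd : e ∈ Fd := Finset.mem_filter.2 ⟨he, by rw [h1]; norm_num⟩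
      have hle := hεle e heFd
      rw [hroom] at hle
      simp only [h1, if_pos] at hle
      have hceil : (⌈eval' m n x e⌉ : ℝ) ≤ ((eub Γ1 Γ2 g β e : ℤ) : ℝ) := by
        exact_mod_cast Int.cast_le.2 (Int.ceil_le.2 hub)
      rw [h1]
      constructor
      · push_cast
        nlinarith
      · push_cast
        nlinarith
    · have heFd : e ∈ Fd := Finset.mem_filter.2 ⟨he, by rw [hm1]; norm_num⟩
      have hle := hεle e heFd
      rw [hroom] at hle
      simp only [hm1, reduceCtorEq, if_false] at hle
      have hfloor : ((elb Φ1 Φ2 f α e : ℤ) : ℝ) ≤ (⌊eval' m n x e⌋ : ℝ) := by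
        exact_mod_cast Int.cast_le.2 (Int.le_floor.2 hlb)
      rw [hm1]
      constructor
      · push_cast
        nlinarith
      · push_cast
        nlinarith
  · -- zero outside
    intro s hs
    have h1 : x s = 0 := hx.2 s hs
    have h2 : d (.ch s.1 s.2) = 0 := by
      by_contra hd
      have := (mem_fracSet.1 (hsupp _ hd)).1
      rw [mem_EE_ch] at this
      rw [Prod.mk.eta] at this
      exact hs this
    simp only [h1, h2]
    norm_num
  · -- measure decreases
    have hsub2 : fracSet m n (fun s => x s + ε * (d (.ch s.1 s.2) : ℝ)) ⊆ fracSet m n x := by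
      intro e he
      rw [mem_fracSet] at he ⊢
      obtain ⟨heE, hef⟩ := he
      refine ⟨heE, ?_⟩
      by_cases hd : d e = 0
      · rw [heval ε e heE, hd] at hef
        intro hint
        apply hef
        obtain ⟨k, hk⟩ := hint
        exact ⟨k, by rw [← hk]; push_cast; ring⟩
      · exact (mem_fracSet.1 (hsupp e hd)).2
    obtain ⟨e₁, he₁, hmin⟩ := Finset.exists_mem_eq_inf' hFdne room
    have he₁E : e₁ ∈ EE m n := (Finset.mem_filter.1 he₁).1
    have he₁d : d e₁ ≠ 0 := (Finset.mem_filter.1 he₁).2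
    apply Finset.card_lt_card
    rw [Finset.ssubset_iff_of_subset hsub2]
    refine ⟨e₁, mem_fracSet.2 ⟨he₁E, (mem_fracSet.1 (hsupp e₁ he₁d)).2⟩, ?_⟩
    rw [mem_fracSet]
    rintro ⟨-, hef⟩
    apply hef
    rw [heval ε e₁ he₁E]
    have hεr : ε = room e₁ := hε.trans hmin
    rcases hvals e₁ with h0 | h1 | hm1
    · exact absurd h0 he₁d
    · refine ⟨⌈eval' m n x e₁⌉, ?_⟩
      rw [hεr, h1]
      simp only [hroom, h1, eq_self_iff_true, if_true, Int.cast_one]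
      ring
    · refine ⟨⌊eval' m n x e₁⌋, ?_⟩
      rw [hεr, hm1]
      simp only [hroom, hm1, reduceCtorEq, if_false, Int.cast_neg, Int.cast_one]
      ring

def PBMset (m n : ℕ) (Φ1 Γ1 Φ2 Γ2 f g : ℕ × ℕ → ℤ) (α β : ℤ) : Set (ℕ × ℕ → ℝ) :=
  {x : ℕ × ℕ → ℝ |
    ∃ A : ℕ × ℕ → ℤ, (∀ s, x s = (A s : ℝ)) ∧ (∀ s ∉ Smn m n, A s = 0) ∧
      IsPBM m n Φ1 Γ1 Φ2 Γ2 A ∧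
      (∀ s ∈ Smn m n, f s ≤ A s ∧ A s ≤ g s) ∧
      (α ≤ fsum A (Smn m n) ∧ fsum A (Smn m n) ≤ β)}

def RHSset (m n : ℕ) (Φ1 Γ1 Φ2 Γ2 f g : ℕ × ℕ → ℤ) (α β : ℤ) : Set (ℕ × ℕ → ℝ) :=
  {x : ℕ × ℕ → ℝ |
    (∀ i ∈ Finset.Icc 1 m, ∀ j ∈ Finset.Icc 1 n,
      ((Φ1 (i, j) : ℝ) ≤ ∑ s ∈ hPrefix i j, x s ∧
        ∑ s ∈ hPrefix i j, x s ≤ (Γ1 (i, j) : ℝ)) ∧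
      ((Φ2 (i, j) : ℝ) ≤ ∑ s ∈ vPrefix i j, x s ∧
        ∑ s ∈ vPrefix i j, x s ≤ (Γ2 (i, j) : ℝ))) ∧
    (∀ s ∈ Smn m n, (f s : ℝ) ≤ x s ∧ x s ≤ (g s : ℝ)) ∧
    ((α : ℝ) ≤ ∑ s ∈ Smn m n, x s ∧ ∑ s ∈ Smn m n, x s ≤ (β : ℝ)) ∧
    (∀ s ∉ Smn m n, x s = 0)}

lemma int_mem_PBMset {m n : ℕ} {Φ1 Γ1 Φ2 Γ2 f g : ℕ × ℕ → ℤ} {α β : ℤ} (x : ℕ × ℕ → ℝ)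
    (hx : InP m n Φ1 Γ1 Φ2 Γ2 f g α β x)
    (hall : ∀ e ∈ EE m n, IsIntR (eval' m n x e)) :
    x ∈ PBMset m n Φ1 Γ1 Φ2 Γ2 f g α β := by
  classical
  have hxint : ∀ s, IsIntR (x s) := by
    intro s
    by_cases hs : s ∈ Smn m n
    · have := hall (.ch s.1 s.2) (mem_EE_ch.2 (by rwa [Prod.mk.eta]))
      simpa only [eval', Prod.mk.eta] using this
    · rw [hx.2 s hs]
      exact ⟨0, by norm_num⟩
  choose A hA using hxint
  have hcast : ∀ X : Finset (ℕ × ℕ), ((fsum A X : ℤ) : ℝ) = ∑ s ∈ X, x s := by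
    intro X
    unfold fsum
    push_cast
    exact Finset.sum_congr rfl fun s _ => (hA s).symm
  refine ⟨A, hA, ?_, ?_, ?_, ?_, ?_⟩
  · intro s hs
    have h1 := hx.2 s hs
    rw [hA s] at h1
    exact_mod_cast h1
  · intro i hi j hj
    have hs : (i, j) ∈ Smn m n :=
      mem_Smn'.2 ⟨Finset.mem_Icc.1 hi, Finset.mem_Icc.1 hj⟩
    obtain ⟨hR1, hR2⟩ := hx.1 (.R i j) (mem_EE_R.2 hs)
    obtain ⟨hC1, hC2⟩ := hx.1 (.C i j) (mem_EE_C.2 hs)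
    simp only [eval', elb, eub] at hR1 hR2 hC1 hC2
    rw [← hcast] at hR1 hR2 hC1 hC2
    exact ⟨⟨by exact_mod_cast hR1, by exact_mod_cast hR2⟩,
      ⟨by exact_mod_cast hC1, by exact_mod_cast hC2⟩⟩
  · intro s hs
    obtain ⟨h1, h2⟩ := hx.1 (.ch s.1 s.2) (mem_EE_ch.2 (by rwa [Prod.mk.eta]))
    simp only [eval', elb, eub, Prod.mk.eta] at h1 h2
    rw [hA s] at h1 h2
    exact ⟨by exact_mod_cast h1, by exact_mod_cast h2⟩
  · obtain ⟨h1, -⟩ := hx.1 .T mem_EE_T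
    simp only [eval', elb, eub] at h1
    rw [← hcast] at h1
    exact_mod_cast h1
  · obtain ⟨-, h2⟩ := hx.1 .T mem_EE_T
    simp only [eval', elb, eub] at h2
    rw [← hcast] at h2
    exact_mod_cast h2

open Finset

section Core

variable {V E : Type*} [DecidableEq V] [DecidableEq E]

/-- One step of the non-backtracking walk. -/
noncomputable def wstep (F : Finset E) (src tgt : E → V)
    (hdeg : ∀ v, ∀ e ∈ F, (src e = v ∨ tgt e = v) →
      ∃ e' ∈ F, e' ≠ e ∧ (src e' = v ∨ tgt e' = v)) :
    {q : V × E // q.2 ∈ F ∧ (src q.2 = q.1 ∨ tgt q.2 = q.1)} →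
    {q : V × E // q.2 ∈ F ∧ (src q.2 = q.1 ∨ tgt q.2 = q.1)} := fun q =>
  let spec := hdeg q.1.1 q.1.2 q.2.1 q.2.2
  let e' := Classical.choose spec
  have h' : e' ∈ F ∧ e' ≠ q.1.2 ∧ (src e' = q.1.1 ∨ tgt e' = q.1.1) := by
    obtain ⟨h1, h2, h3⟩ := Classical.choose_spec spec
    exact ⟨h1, h2, h3⟩
  ⟨(if src e' = q.1.1 then tgt e' else src e', e'), h'.1, by
    dsimp only
    split
    · exact Or.inr rfl
    · exact Or.inl rfl⟩

lemma wstep_spec (F : Finset E) (src tgt : E → V)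
    (hdeg : ∀ v, ∀ e ∈ F, (src e = v ∨ tgt e = v) →
      ∃ e' ∈ F, e' ≠ e ∧ (src e' = v ∨ tgt e' = v))
    (q : {q : V × E // q.2 ∈ F ∧ (src q.2 = q.1 ∨ tgt q.2 = q.1)}) :
    (wstep F src tgt hdeg q).1.2 ≠ q.1.2 ∧
      ((src (wstep F src tgt hdeg q).1.2 = q.1.1 ∧
          tgt (wstep F src tgt hdeg q).1.2 = (wstep F src tgt hdeg q).1.1) ∨
        (tgt (wstep F src tgt hdeg q).1.2 = q.1.1 ∧
          src (wstep F src tgt hdeg q).1.2 = (wstep F src tgt hdeg q).1.1)) := by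
  unfold wstep
  obtain ⟨h1, h2, h3⟩ := Classical.choose_spec (hdeg q.1.1 q.1.2 q.2.1 q.2.2)
  dsimp only
  refine ⟨h2, ?_⟩
  split_ifs with h
  · exact Or.inl ⟨h, rfl⟩
  · rcases h3 with h3 | h3
    · exact absurd h3 h
    · exact Or.inr ⟨h3, rfl⟩

theorem exists_cycle_circulation (F : Finset E) (hne : F.Nonempty)
    (src tgt : E → V)
    (hloop : ∀ e ∈ F, src e ≠ tgt e)
    (hdeg : ∀ v, ∀ e ∈ F, (src e = v ∨ tgt e = v) →
      ∃ e' ∈ F, e' ≠ e ∧ (src e' = v ∨ tgt e' = v)) :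
    ∃ d : E → ℤ,
      (∀ e, d e ≠ 0 → e ∈ F) ∧ (∃ e, d e ≠ 0) ∧
      (∀ e, d e = 0 ∨ d e = 1 ∨ d e = -1) ∧
      (∀ p : V → ℤ, ∑ e ∈ F, d e * (p (tgt e) - p (src e)) = 0) := by
  classical
  obtain ⟨e₀, he₀⟩ := hne
  set st : ℕ → {q : V × E // q.2 ∈ F ∧ (src q.2 = q.1 ∨ tgt q.2 = q.1)} :=
    fun k => (wstep F src tgt hdeg)^[k] ⟨(tgt e₀, e₀), he₀, Or.inr rfl⟩ with hst
  set vs : ℕ → V := fun k => (st k).1.1 with hvs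
  set es : ℕ → E := fun k => (st k).1.2 with hes
  have hF : ∀ k, es k ∈ F := fun k => (st k).2.1
  have hstep : ∀ k, es (k+1) ≠ es k ∧
      ((src (es (k+1)) = vs k ∧ tgt (es (k+1)) = vs (k+1)) ∨
        (tgt (es (k+1)) = vs k ∧ src (es (k+1)) = vs (k+1))) := by
    intro k
    have h : st (k+1) = wstep F src tgt hdeg (st k) := by
      simp only [hst, Function.iterate_succ_apply']
    have := wstep_spec F src tgt hdeg (st k)
    rw [← h] at this
    exact this
  -- pigeonhole
  have hvmem : ∀ k, vs k ∈ F.image src ∪ F.image tgt := by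
    intro k
    rcases (st k).2.2 with h | h
    · exact mem_union_left _ (mem_image.2 ⟨es k, hF k, h⟩)
    · exact mem_union_right _ (mem_image.2 ⟨es k, hF k, h⟩)
  obtain ⟨a, -, b, -, hab, hvab⟩ :=
    Finset.exists_ne_map_eq_of_card_lt_of_maps_to
      (s := Finset.range ((F.image src ∪ F.image tgt).card + 1))
      (by simp) (fun k _ => hvmem k)
  wlog h' : a < b generalizing a b
  · exact this b a hab.symm hvab.symm (by omega)
  have hPb : ∃ l, ∃ k, k < l ∧ vs k = vs l := ⟨b, a, h', hvab⟩
  set l₀ := Nat.find hPb with hl₀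
  obtain ⟨k₀, hk₀l, hvk₀⟩ := Nat.find_spec hPb
  have hmin : ∀ l < l₀, ¬ ∃ k, k < l ∧ vs k = vs l := fun l hl => Nat.find_min hPb hl
  -- injectivity of vs on [0, l₀)
  have vinj : ∀ {c e' : ℕ}, c < e' → e' < l₀ → vs c ≠ vs e' := by
    intro c e' hce he' h
    exact hmin e' he' ⟨c, hce, h⟩
  -- edge distinctness
  have hedist : ∀ {c e' : ℕ}, k₀ ≤ c → c < e' → e' < l₀ → es (c+1) ≠ es (e'+1) := by
    intro c e' hc hce he' h
    obtain ⟨-, hoc⟩ := hstep c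
    obtain ⟨hne', hoe⟩ := hstep e'
    rw [h] at hoc
    rcases hoc with ⟨hsc, htc⟩ | ⟨htc, hsc⟩ <;> rcases hoe with ⟨hse, hte⟩ | ⟨hte, hse⟩
    · exact vinj hce he' (hsc.symm.trans hse)
    · -- vs c = vs (e'+1), vs (c+1) = vs e'
      have h1 : vs c = vs (e'+1) := hsc.symm.trans hse
      have h2 : vs (c+1) = vs e' := htc.symm.trans hte
      rcases Nat.lt_or_ge (e'+1) l₀ with hl | hl
      · exact vinj (by omega) hl h1
      · have hel : e' + 1 = l₀ := by omega
        have h3 : vs c = vs k₀ := by rw [h1, hel, ← hvk₀]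
        have hck : c = k₀ := by
          by_contra hck
          exact vinj (show k₀ < c by omega) (by omega) h3.symm
        have hb : e' = c + 1 := by
          by_contra hb
          exact vinj (show c + 1 < e' by omega) (by omega) h2
        rw [hb] at h
        exact (hstep (c+1)).1 h.symm
    · have h1 : vs c = vs (e'+1) := htc.symm.trans hte
      have h2 : vs (c+1) = vs e' := hsc.symm.trans hse
      rcases Nat.lt_or_ge (e'+1) l₀ with hl | hl
      · exact vinj (by omega) hl h1
      · have hel : e' + 1 = l₀ := by omega
        have h3 : vs c = vs k₀ := by rw [h1, hel, ← hvk₀]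
        have hck : c = k₀ := by
          by_contra hck
          exact vinj (show k₀ < c by omega) (by omega) h3.symm
        have hb : e' = c + 1 := by
          by_contra hb
          exact vinj (show c + 1 < e' by omega) (by omega) h2
        rw [hb] at h
        exact (hstep (c+1)).1 h.symm
    · exact vinj hce he' (htc.symm.trans hte)
  set σ : ℕ → ℤ := fun k => if src (es (k+1)) = vs k then 1 else -1 with hσ
  set d : E → ℤ := fun e => ∑ k ∈ Finset.Ico k₀ l₀, if es (k+1) = e then σ k else 0 with hd
  have hsupp : ∀ e, d e ≠ 0 → e ∈ F := by
    intro e he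
    rw [hd] at he
    by_contra hef
    apply he
    apply Finset.sum_eq_zero
    intro k hk
    split
    · next heq => rw [← heq] at hef; exact absurd (hF (k+1)) hef
    · rfl
  have hval : ∀ k, k₀ ≤ k → k < l₀ → d (es (k+1)) = σ k := by
    intro k hk hkl
    have : d (es (k+1)) = ∑ k' ∈ Finset.Ico k₀ l₀, if es (k'+1) = es (k+1) then σ k' else 0 := rfl
    rw [this, Finset.sum_eq_single k]
    · rw [if_pos rfl]
    · intro k' hk' hne
      rw [Finset.mem_Ico] at hk'
      have hne2 : es (k'+1) ≠ es (k+1) := by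
        rcases Nat.lt_or_ge k' k with h | h
        · exact hedist hk'.1 h hkl
        · exact fun hq => (hedist hk (by omega) hk'.2 hq.symm)
      rw [if_neg hne2]
    · intro hk'
      exact absurd (Finset.mem_Ico.2 ⟨hk, hkl⟩) hk'
  have hσval : ∀ k, σ k = 1 ∨ σ k = -1 := by
    intro k; rw [hσ]; dsimp only; split <;> simp
  refine ⟨d, hsupp, ?_, ?_, ?_⟩
  · refine ⟨es ((l₀ - 1) + 1), ?_⟩
    have h1 : k₀ ≤ l₀ - 1 := by omega
    have h2 : l₀ - 1 < l₀ := by omega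
    rw [hval _ h1 h2]
    rcases hσval (l₀ - 1) with h | h <;> rw [h] <;> norm_num
  · intro e
    by_cases he : ∃ k, k₀ ≤ k ∧ k < l₀ ∧ es (k+1) = e
    · obtain ⟨k, hk1, hk2, hk3⟩ := he
      rw [← hk3, hval k hk1 hk2]
      rcases hσval k with h | h <;> rw [h] <;> simp
    · left
      rw [hd]
      apply Finset.sum_eq_zero
      intro k hk
      rw [Finset.mem_Ico] at hk
      have : es (k+1) ≠ e := fun hq => he ⟨k, hk.1, hk.2, hq⟩
      simp [this]
  · intro p
    have hswap : ∑ e ∈ F, d e * (p (tgt e) - p (src e)) =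
        ∑ k ∈ Finset.Ico k₀ l₀, σ k * (p (tgt (es (k+1))) - p (src (es (k+1)))) := by
      rw [hd]
      simp only [Finset.sum_mul]
      rw [Finset.sum_comm]
      apply Finset.sum_congr rfl
      intro k hk
      have hpt : ∀ e ∈ F, (if es (k+1) = e then σ k else 0) * (p (tgt e) - p (src e)) =
          if es (k+1) = e then σ k * (p (tgt e) - p (src e)) else 0 := by
        intro e _; split <;> simp
      rw [Finset.sum_congr rfl hpt, Finset.sum_ite_eq F (es (k+1))
        (fun e => σ k * (p (tgt e) - p (src e))), if_pos (hF (k+1))]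
    rw [hswap]
    have hterm : ∀ k, σ k * (p (tgt (es (k+1))) - p (src (es (k+1)))) =
        p (vs (k+1)) - p (vs k) := by
      intro k
      obtain ⟨-, ho⟩ := hstep k
      rcases ho with ⟨hs, ht⟩ | ⟨ht, hs⟩
      · have h1 : σ k = 1 := by rw [hσ]; exact if_pos hs
        rw [h1, one_mul, ht, hs]
      · have hcond : ¬ (src (es (k+1)) = vs k) := by
          intro hc
          exact hloop _ (hF (k+1)) (hc.trans ht.symm)
        have h1 : σ k = -1 := by rw [hσ]; exact if_neg hcond
        rw [h1, ht, hs]; ring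
    rw [Finset.sum_congr rfl (fun k _ => hterm k)]
    rw [Finset.sum_Ico_eq_sum_range]
    have hpt2 : ∀ i ∈ Finset.range (l₀ - k₀), p (vs (k₀ + i + 1)) - p (vs (k₀ + i)) =
        (fun j => p (vs (k₀ + j))) (i+1) - (fun j => p (vs (k₀ + j))) i := by
      intro i _; simp only; rw [Nat.add_assoc]
    rw [Finset.sum_congr rfl hpt2]
    rw [Finset.sum_range_sub (fun j => p (vs (k₀ + j)))]
    have h1 : k₀ + (l₀ - k₀) = l₀ := by omega
    rw [h1, Nat.add_zero, ← hvk₀, sub_self]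

end Core

lemma InP_mem_hull {m n : ℕ} {Φ1 Γ1 Φ2 Γ2 f g : ℕ × ℕ → ℤ} {α β : ℤ}
    (hm : 1 ≤ m) (hn : 1 ≤ n) :
    ∀ N (x : ℕ × ℕ → ℝ), (fracSet m n x).card ≤ N → InP m n Φ1 Γ1 Φ2 Γ2 f g α β x →
      x ∈ convexHull ℝ (PBMset m n Φ1 Γ1 Φ2 Γ2 f g α β) := by
  intro N
  induction N with
  | zero =>
    intro x hcard hx
    have hempty : fracSet m n x = ∅ := Finset.card_eq_zero.1 (Nat.le_zero.1 hcard)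
    have hall : ∀ e ∈ EE m n, IsIntR (eval' m n x e) := by
      intro e he
      by_contra hf
      have hmem : e ∈ fracSet m n x := mem_fracSet.2 ⟨he, hf⟩
      rw [hempty] at hmem
      exact absurd hmem (Finset.notMem_empty e)
    exact subset_convexHull ℝ _ (int_mem_PBMset x hx hall)
  | succ N ih =>
    intro x hcard hx
    by_cases hN : (fracSet m n x).card ≤ N
    · exact ih x hN hx
    · have hne : (fracSet m n x).Nonempty := by
        rw [← Finset.card_pos]
        omega
      obtain ⟨d, hsupp, hnz, hvals, hcons⟩ := exists_cycle_circulation (fracSet m n x) hne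
        (esrc m) (etgt n) (network_loopless m n x) (network_deg hm hn)
      obtain ⟨hf1, hf2, hf3⟩ := flow_identities d hsupp hcons
      obtain ⟨ε₁, hε₁, hxP1, hc1⟩ := push hx d hsupp hvals hnz hf1 hf2 hf3
      set d' : Edg → ℤ := fun e => - d e with hd'
      have hsupp' : ∀ e, d' e ≠ 0 → e ∈ fracSet m n x := fun e he =>
        hsupp e (by simpa [hd'] using he)
      have hvals' : ∀ e, d' e = 0 ∨ d' e = 1 ∨ d' e = -1 := by
        intro e
        rcases hvals e with h | h | h <;> simp [hd', h]
      have hnz' : ∃ e, d' e ≠ 0 := by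
        obtain ⟨e, he⟩ := hnz
        exact ⟨e, by simpa [hd'] using he⟩
      have hf1' : ∀ i j, (i, j) ∈ Smn m n →
          ∑ s ∈ hPrefix i j, d' (.ch s.1 s.2) = d' (.R i j) := by
        intro i j hij
        simp only [hd']
        rw [Finset.sum_neg_distrib, hf1 i j hij]
      have hf2' : ∀ i j, (i, j) ∈ Smn m n →
          ∑ s ∈ vPrefix i j, d' (.ch s.1 s.2) = d' (.C i j) := by
        intro i j hij
        simp only [hd']
        rw [Finset.sum_neg_distrib, hf2 i j hij]
      have hf3' : ∑ s ∈ Smn m n, d' (.ch s.1 s.2) = d' .T := by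
        simp only [hd']
        rw [Finset.sum_neg_distrib, hf3]
      obtain ⟨ε₂, hε₂, hxP2, hc2⟩ := push hx d' hsupp' hvals' hnz' hf1' hf2' hf3'
      have hx1 := ih _ (by omega) hxP1
      have hx2 := ih _ (by omega) hxP2
      have hne0 : ε₁ + ε₂ ≠ 0 := by linarith
      have ha : (0:ℝ) ≤ ε₂ / (ε₁ + ε₂) := div_nonneg (le_of_lt hε₂) (by linarith)
      have hb : (0:ℝ) ≤ ε₁ / (ε₁ + ε₂) := div_nonneg (le_of_lt hε₁) (by linarith)
      have hab : ε₂ / (ε₁ + ε₂) + ε₁ / (ε₁ + ε₂) = 1 := by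
        field_simp
        ring
      have hcomb := (convex_convexHull ℝ (PBMset m n Φ1 Γ1 Φ2 Γ2 f g α β)) hx1 hx2 ha hb hab
      have hxeq : x = (ε₂ / (ε₁ + ε₂)) • (fun s => x s + ε₁ * (d (.ch s.1 s.2) : ℝ)) +
          (ε₁ / (ε₁ + ε₂)) • (fun s => x s + ε₂ * (d' (.ch s.1 s.2) : ℝ)) := by
        funext s
        simp only [Pi.add_apply, Pi.smul_apply, smul_eq_mul, hd', Int.cast_neg]
        field_simp
        ring
      rw [hxeq]
      exact hcomb

lemma cvx_lb {a b u v L : ℝ} (ha : 0 ≤ a) (hb : 0 ≤ b) (hab : a + b = 1)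
    (hu : L ≤ u) (hv : L ≤ v) : L ≤ a * u + b * v := by
  calc L = a * L + b * L := by rw [← add_mul, hab, one_mul]
    _ ≤ a * u + b * v :=
      add_le_add (mul_le_mul_of_nonneg_left hu ha) (mul_le_mul_of_nonneg_left hv hb)

lemma cvx_ub {a b u v U : ℝ} (ha : 0 ≤ a) (hb : 0 ≤ b) (hab : a + b = 1)
    (hu : u ≤ U) (hv : v ≤ U) : a * u + b * v ≤ U := by
  calc a * u + b * v ≤ a * U + b * U :=
      add_le_add (mul_le_mul_of_nonneg_left hu ha) (mul_le_mul_of_nonneg_left hv hb)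
    _ = U := by rw [← add_mul, hab, one_mul]

lemma convex_RHSset (m n : ℕ) (Φ1 Γ1 Φ2 Γ2 f g : ℕ × ℕ → ℤ) (α β : ℤ) :
    Convex ℝ (RHSset m n Φ1 Γ1 Φ2 Γ2 f g α β) := by
  intro x hx y hy a b ha hb hab
  obtain ⟨hx1, hx2, hx3, hx4⟩ := hx
  obtain ⟨hy1, hy2, hy3, hy4⟩ := hy
  have happ : ∀ s, (a • x + b • y) s = a * x s + b * y s := by
    intro s
    simp [Pi.add_apply, Pi.smul_apply, smul_eq_mul]
  have hsum : ∀ X : Finset (ℕ × ℕ), ∑ s ∈ X, (a • x + b • y) s =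
      a * ∑ s ∈ X, x s + b * ∑ s ∈ X, y s := by
    intro X
    rw [Finset.sum_congr rfl (fun s _ => happ s), Finset.sum_add_distrib,
      ← Finset.mul_sum, ← Finset.mul_sum]
  refine ⟨?_, ?_, ?_, ?_⟩
  · intro i hi j hj
    obtain ⟨⟨p1, p2⟩, ⟨p3, p4⟩⟩ := hx1 i hi j hj
    obtain ⟨⟨q1, q2⟩, ⟨q3, q4⟩⟩ := hy1 i hi j hj
    rw [hsum, hsum]
    exact ⟨⟨cvx_lb ha hb hab p1 q1, cvx_ub ha hb hab p2 q2⟩,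
      ⟨cvx_lb ha hb hab p3 q3, cvx_ub ha hb hab p4 q4⟩⟩
  · intro s hs
    obtain ⟨p1, p2⟩ := hx2 s hs
    obtain ⟨q1, q2⟩ := hy2 s hs
    rw [happ]
    exact ⟨cvx_lb ha hb hab p1 q1, cvx_ub ha hb hab p2 q2⟩
  · rw [hsum]
    exact ⟨cvx_lb ha hb hab hx3.1 hy3.1, cvx_ub ha hb hab hx3.2 hy3.2⟩
  · intro s hs
    rw [happ, hx4 s hs, hy4 s hs]
    ring

lemma PBMset_sub (m n : ℕ) (Φ1 Γ1 Φ2 Γ2 f g : ℕ × ℕ → ℤ) (α β : ℤ) :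
    PBMset m n Φ1 Γ1 Φ2 Γ2 f g α β ⊆ RHSset m n Φ1 Γ1 Φ2 Γ2 f g α β := by
  rintro x ⟨A, hA, hA0, hPBM, hent, htot⟩
  have hcast : ∀ X : Finset (ℕ × ℕ), ∑ s ∈ X, x s = ((fsum A X : ℤ) : ℝ) := by
    intro X
    unfold fsum
    push_cast
    exact Finset.sum_congr rfl fun s _ => hA s
  refine ⟨?_, ?_, ?_, ?_⟩
  · intro i hi j hj
    obtain ⟨⟨p1, p2⟩, ⟨p3, p4⟩⟩ := hPBM i hi j hj
    rw [hcast, hcast]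
    exact ⟨⟨by exact_mod_cast p1, by exact_mod_cast p2⟩,
      ⟨by exact_mod_cast p3, by exact_mod_cast p4⟩⟩
  · intro s hs
    obtain ⟨p1, p2⟩ := hent s hs
    rw [hA s]
    exact ⟨by exact_mod_cast p1, by exact_mod_cast p2⟩
  · rw [hcast]
    exact ⟨by exact_mod_cast htot.1, by exact_mod_cast htot.2⟩
  · intro s hs
    rw [hA s, hA0 s hs]
    norm_num

lemma RHS_to_InP {m n : ℕ} {Φ1 Γ1 Φ2 Γ2 f g : ℕ × ℕ → ℤ} {α β : ℤ} {x : ℕ × ℕ → ℝ}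
    (hx : x ∈ RHSset m n Φ1 Γ1 Φ2 Γ2 f g α β) : InP m n Φ1 Γ1 Φ2 Γ2 f g α β x := by
  obtain ⟨hx1, hx2, hx3, hx4⟩ := hx
  refine ⟨?_, hx4⟩
  intro e he
  rcases EE_cases he with ⟨i, j, hs, rfl⟩ | ⟨i, j, hs, rfl⟩ | ⟨i, j, hs, rfl⟩ | rfl
  · exact hx2 (i, j) hs
  · obtain ⟨⟨h1, h2⟩, ⟨h3, h4⟩⟩ := mem_Smn'.1 hs
    exact (hx1 i (Finset.mem_Icc.2 ⟨h1, h2⟩) j (Finset.mem_Icc.2 ⟨h3, h4⟩)).1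
  · obtain ⟨⟨h1, h2⟩, ⟨h3, h4⟩⟩ := mem_Smn'.1 hs
    exact (hx1 i (Finset.mem_Icc.2 ⟨h1, h2⟩) j (Finset.mem_Icc.2 ⟨h3, h4⟩)).2
  · exact hx3

theorem stmt_8' (m n : ℕ) (hm : 1 ≤ m) (hn : 1 ≤ n)
    (Φ1 Γ1 Φ2 Γ2 f g : ℕ × ℕ → ℤ) (α β : ℤ)
    (hΦΓ1 : ∀ s ∈ Smn m n, Φ1 s ≤ Γ1 s) (hΦΓ2 : ∀ s ∈ Smn m n, Φ2 s ≤ Γ2 s)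
    (hfg : ∀ s ∈ Smn m n, f s ≤ g s) (hαβ : α ≤ β) :
    convexHull ℝ (PBMset m n Φ1 Γ1 Φ2 Γ2 f g α β) = RHSset m n Φ1 Γ1 Φ2 Γ2 f g α β := by
  apply Set.Subset.antisymm
  · exact convexHull_min (PBMset_sub m n Φ1 Γ1 Φ2 Γ2 f g α β)
      (convex_RHSset m n Φ1 Γ1 Φ2 Γ2 f g α β)
  · intro x hx
    exact InP_mem_hull hm hn _ x (le_refl _) (RHS_to_InP hx)

/-- the convex hull of the integer prefix-bounded matrices with
entry bounds f ≤ g and total-sum bounds α ≤ β is the polyhedron described by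
the prefix, entry, and total-sum inequalities. (Matrices of size m×n are
encoded as functions ℕ × ℕ → ℝ vanishing outside S_{m,n}.) -/
theorem stmt_8 (m n : ℕ) (hm : 1 ≤ m) (hn : 1 ≤ n)
    (Φ1 Γ1 Φ2 Γ2 f g : ℕ × ℕ → ℤ) (α β : ℤ)
    (hΦΓ1 : ∀ s ∈ Smn m n, Φ1 s ≤ Γ1 s) (hΦΓ2 : ∀ s ∈ Smn m n, Φ2 s ≤ Γ2 s)
    (hfg : ∀ s ∈ Smn m n, f s ≤ g s) (hαβ : α ≤ β) :
    convexHull ℝ {x : ℕ × ℕ → ℝ |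
        ∃ A : ℕ × ℕ → ℤ, (∀ s, x s = (A s : ℝ)) ∧ (∀ s ∉ Smn m n, A s = 0) ∧
          IsPBM m n Φ1 Γ1 Φ2 Γ2 A ∧
          (∀ s ∈ Smn m n, f s ≤ A s ∧ A s ≤ g s) ∧
          (α ≤ fsum A (Smn m n) ∧ fsum A (Smn m n) ≤ β)} =
      {x : ℕ × ℕ → ℝ |
        (∀ i ∈ Finset.Icc 1 m, ∀ j ∈ Finset.Icc 1 n,
          ((Φ1 (i, j) : ℝ) ≤ ∑ s ∈ hPrefix i j, x s ∧
            ∑ s ∈ hPrefix i j, x s ≤ (Γ1 (i, j) : ℝ)) ∧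
          ((Φ2 (i, j) : ℝ) ≤ ∑ s ∈ vPrefix i j, x s ∧
            ∑ s ∈ vPrefix i j, x s ≤ (Γ2 (i, j) : ℝ))) ∧
        (∀ s ∈ Smn m n, (f s : ℝ) ≤ x s ∧ x s ≤ (g s : ℝ)) ∧
        ((α : ℝ) ≤ ∑ s ∈ Smn m n, x s ∧ ∑ s ∈ Smn m n, x s ≤ (β : ℝ)) ∧
        (∀ s ∉ Smn m n, x s = 0)} := by
  apply Set.Subset.antisymm
  · exact convexHull_min (PBMset_sub m n Φ1 Γ1 Φ2 Γ2 f g α β)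
      (convex_RHSset m n Φ1 Γ1 Φ2 Γ2 f g α β)
  · intro x hx
    exact InP_mem_hull hm hn _ x (le_refl _) (RHS_to_InP hx)
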